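/- For any Boolean function f: {0,1}^ℓ → {0,1}, the total online influence satisfies oI[f] ≤ sqrt(ℓ · Var(e(f))), where e(f)(x) = (-1)^{f(x)}. -/

import Mathlib

/-!
Let `A_k(x)` be the average of `f` over the inputs agreeing with `x` in the first `k` coordinates,
so `A_0 = E f` and `A_ℓ = f`. Pairing the two values of `x_i` shows that
`E[A_{i+1}² - A_i²] = E[D_i²] / 4`, where `D_i` is the difference of the two conditional
expectations in `oI_i`; telescoping gives `∑ᵢ E[D_i²] = 4 (E f - (E f)²) = Var(e(f))`.
Cauchy–Schwarz over the `ℓ · 2^ℓ` pairs `(i, x)` then bounds `oI[f]²` by `ℓ · Var(e(f))`.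
-/

open Finset

def b2r (b : Bool) : ℝ := if b then 1 else 0

noncomputable def condExp {ℓ : ℕ} (f : (Fin ℓ → Bool) → Bool) (i : Fin ℓ) (p : Fin ℓ → Bool)
    (b : Bool) : ℝ :=
  (∑ x : Fin ℓ → Bool, if (∀ j, j < i → x j = p j) ∧ x i = b then b2r (f x) else 0)
    / 2 ^ (ℓ - (i : ℕ) - 1)

/-- Online influence of coordinate `i`: the expectation over a uniform prefix of the absolute
difference of the conditional expectations of `f` with coordinate `i` set to `1` resp. `0`,
the remaining coordinates being uniform. -/
noncomputable def oI {ℓ : ℕ} (f : (Fin ℓ → Bool) → Bool) (i : Fin ℓ) : ℝ :=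
  (∑ p : Fin ℓ → Bool, |condExp f i p true - condExp f i p false|) / 2 ^ ℓ

/-- Total online influence. -/
noncomputable def totalOI {ℓ : ℕ} (f : (Fin ℓ → Bool) → Bool) : ℝ := ∑ i, oI f i

/-- Mean of `f` under the uniform distribution. -/
noncomputable def meanF {ℓ : ℕ} (f : (Fin ℓ → Bool) → Bool) : ℝ :=
  (∑ x : Fin ℓ → Bool, b2r (f x)) / 2 ^ ℓ

/-- `e(f)(x) = (-1)^(f x)`. -/
noncomputable def esign {ℓ : ℕ} (f : (Fin ℓ → Bool) → Bool) (x : Fin ℓ → Bool) : ℝ :=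
  if f x then -1 else 1

/-- Variance of `e(f) = (-1)^f` under the uniform distribution. -/
noncomputable def varE {ℓ : ℕ} (f : (Fin ℓ → Bool) → Bool) : ℝ :=
  (∑ x : Fin ℓ → Bool, esign f x ^ 2) / 2 ^ ℓ - ((∑ x : Fin ℓ → Bool, esign f x) / 2 ^ ℓ) ^ 2

theorem sum_update_true_add_update_false {ι : Type*} [Fintype ι] [DecidableEq ι]
    (h : (ι → Bool) → ℝ) (i : ι) :
    ∑ p, (h (Function.update p i true) + h (Function.update p i false)) = 2 * ∑ p, h p := by
  have hflip : Function.Involutive fun p : ι → Bool => Function.update p i (!p i) := by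
    intro p
    simp
  have hpair : ∀ p, h (Function.update p i true) + h (Function.update p i false)
      = h p + h (Function.update p i (!p i)) := by
    intro p
    have hself := Function.update_eq_self i p
    cases hp : p i <;> rw [hp] at hself <;> simp [hself, add_comm]
  rw [sum_congr rfl fun p _ => hpair p, sum_add_distrib, two_mul]
  congr 1
  exact Equiv.sum_comp (hflip.toPerm _) h

theorem b2r_sq (b : Bool) : b2r b ^ 2 = b2r b := by
  cases b <;> norm_num [b2r]

section

variable {ℓ : ℕ}

noncomputable def prefixAvg (g : (Fin ℓ → Bool) → ℝ) (k : ℕ) (p : Fin ℓ → Bool) : ℝ :=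
  (∑ x : Fin ℓ → Bool, if ∀ j : Fin ℓ, (j : ℕ) < k → x j = p j then g x else 0) / 2 ^ (ℓ - k)

theorem prefixAvg_zero (g : (Fin ℓ → Bool) → ℝ) (p : Fin ℓ → Bool) :
    prefixAvg g 0 p = (∑ x, g x) / 2 ^ ℓ := by
  simp [prefixAvg]

theorem prefixAvg_self (g : (Fin ℓ → Bool) → ℝ) (p : Fin ℓ → Bool) : prefixAvg g ℓ p = g p := by
  have hagree : ∀ x : Fin ℓ → Bool, (∀ j : Fin ℓ, (j : ℕ) < ℓ → x j = p j) ↔ x = p :=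
    fun x => ⟨fun h => funext fun j => h j j.isLt, fun h j _ => h ▸ rfl⟩
  simp only [prefixAvg, hagree]
  simp

theorem forall_lt_succ_eq_update_iff (x p : Fin ℓ → Bool) (i : Fin ℓ) (b : Bool) :
    (∀ j : Fin ℓ, (j : ℕ) < i + 1 → x j = Function.update p i b j) ↔
      (∀ j : Fin ℓ, j < i → x j = p j) ∧ x i = b := by
  refine ⟨fun h => ⟨fun j hj => ?_, by simpa using h i (by omega)⟩, fun ⟨hlt, hi⟩ j hj => ?_⟩
  · simpa [Function.update_of_ne hj.ne] using h j (by omega)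
  · rcases (Nat.lt_succ_iff_lt_or_eq.mp hj) with hj | hj
    · simpa [Function.update_of_ne (Fin.lt_def.mpr hj).ne] using hlt j hj
    · obtain rfl : j = i := Fin.ext hj
      simpa using hi

theorem prefixAvg_eq_average_succ (g : (Fin ℓ → Bool) → ℝ) (i : Fin ℓ) (p : Fin ℓ → Bool) :
    prefixAvg g i p = (prefixAvg g (i + 1) (Function.update p i true)
      + prefixAvg g (i + 1) (Function.update p i false)) / 2 := by
  have hsplit : ∀ x : Fin ℓ → Bool,
      (if ∀ j : Fin ℓ, (j : ℕ) < i → x j = p j then g x else 0)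
        = (if (∀ j : Fin ℓ, j < i → x j = p j) ∧ x i = true then g x else 0)
          + (if (∀ j : Fin ℓ, j < i → x j = p j) ∧ x i = false then g x else 0) := by
    intro x
    cases x i <;> simp
  have hpow : (2 : ℝ) ^ (ℓ - i) = 2 * 2 ^ (ℓ - (i + 1)) := by
    rw [← pow_succ']
    congr 1
    omega
  simp only [prefixAvg, forall_lt_succ_eq_update_iff, hsplit, sum_add_distrib, hpow]
  field_simp

theorem condExp_eq_prefixAvg (f : (Fin ℓ → Bool) → Bool) (i : Fin ℓ) (p : Fin ℓ → Bool)
    (b : Bool) : condExp f i p b = prefixAvg (b2r ∘ f) (i + 1) (Function.update p i b) := by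
  simp only [condExp, prefixAvg, forall_lt_succ_eq_update_iff, Function.comp_apply, Nat.sub_sub]

theorem sum_sq_prefixAvg_succ_sub (g : (Fin ℓ → Bool) → ℝ) (i : Fin ℓ) :
    ∑ p, (prefixAvg g (i + 1) p ^ 2 - prefixAvg g i p ^ 2)
      = (∑ p, (prefixAvg g (i + 1) (Function.update p i true)
          - prefixAvg g (i + 1) (Function.update p i false)) ^ 2) / 4 := by
  set a := fun p => prefixAvg g (i + 1) (Function.update p i true)
  set b := fun p => prefixAvg g (i + 1) (Function.update p i false)
  have hsq : ∑ p, prefixAvg g (i + 1) p ^ 2 = ∑ p, (a p ^ 2 + b p ^ 2) / 2 := by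
    rw [← sum_div, sum_update_true_add_update_false (fun p => prefixAvg g (i + 1) p ^ 2) i]
    ring
  calc ∑ p, (prefixAvg g (i + 1) p ^ 2 - prefixAvg g i p ^ 2)
      = ∑ p, ((a p ^ 2 + b p ^ 2) / 2 - ((a p + b p) / 2) ^ 2) := by
        simp only [sum_sub_distrib, hsq, prefixAvg_eq_average_succ g i, a, b]
    _ = (∑ p, (a p - b p) ^ 2) / 4 := by
        rw [sum_div]
        exact sum_congr rfl fun p _ => by ring

theorem sum_sq_prefixAvg_increment (g : (Fin ℓ → Bool) → ℝ) :
    ∑ i : Fin ℓ, ∑ p, (prefixAvg g (i + 1) (Function.update p i true)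
        - prefixAvg g (i + 1) (Function.update p i false)) ^ 2
      = 4 * (∑ p, g p ^ 2 - (∑ p, g p) ^ 2 / 2 ^ ℓ) := by
  have htel : ∑ i : Fin ℓ, ∑ p, (prefixAvg g (i + 1) p ^ 2 - prefixAvg g i p ^ 2)
      = ∑ p, prefixAvg g ℓ p ^ 2 - ∑ p, prefixAvg g 0 p ^ 2 := by
    rw [← sum_range_sub (fun k => ∑ p, prefixAvg g k p ^ 2), ← Fin.sum_univ_eq_sum_range]
    exact sum_congr rfl fun i _ => sum_sub_distrib _ _
  simp only [sum_sq_prefixAvg_succ_sub, prefixAvg_self, prefixAvg_zero, sum_const, card_univ,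
    Fintype.card_fun, Fintype.card_bool, Fintype.card_fin, nsmul_eq_mul] at htel
  rw [← sum_div, div_eq_iff four_ne_zero] at htel
  rw [htel]
  field_simp
  push_cast
  ring

theorem varE_eq_four_mul (f : (Fin ℓ → Bool) → Bool) : varE f = 4 * (meanF f - meanF f ^ 2) := by
  have hesign : ∀ x, esign f x = 1 - 2 * b2r (f x) := fun x => by
    unfold esign b2r
    cases f x <;> norm_num
  have hsq : ∀ x, esign f x ^ 2 = 1 := fun x => by
    unfold esign
    cases f x <;> norm_num
  simp only [varE, meanF, hsq]
  simp only [hesign, sum_sub_distrib, ← mul_sum, sum_const, card_univ,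
    Fintype.card_fun, Fintype.card_bool, Fintype.card_fin, nsmul_eq_mul]
  field_simp
  push_cast
  ring

theorem sum_sq_condExp_sub (f : (Fin ℓ → Bool) → Bool) :
    ∑ i, ∑ p, (condExp f i p true - condExp f i p false) ^ 2 = 2 ^ ℓ * varE f := by
  simp only [condExp_eq_prefixAvg, sum_sq_prefixAvg_increment, Function.comp_apply, b2r_sq,
    varE_eq_four_mul, meanF]
  field_simp

end

/-- Upper bound: `oI[f] ≤ sqrt(ℓ · Var(e(f)))`. -/
theorem totalOI_le_sqrt {ℓ : ℕ} (f : (Fin ℓ → Bool) → Bool) :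
    totalOI f ≤ Real.sqrt (ℓ * varE f) := by
  set D := fun ip : Fin ℓ × (Fin ℓ → Bool) => condExp f ip.1 ip.2 true - condExp f ip.1 ip.2 false
  have htotal : totalOI f = (∑ ip, |D ip|) / 2 ^ ℓ := by
    simp only [totalOI, oI, ← sum_div, Fintype.sum_prod_type, D]
  apply Real.le_sqrt_of_sq_le
  rw [htotal, div_pow, div_le_iff₀ (by positivity)]
  calc (∑ ip, |D ip|) ^ 2 ≤ (ℓ * 2 ^ ℓ) * ∑ ip, D ip ^ 2 := by
        simpa [sq_abs, Fintype.card_prod] using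
          sq_sum_le_card_mul_sum_sq (s := univ) (f := fun ip => |D ip|)
    _ = ℓ * varE f * (2 ^ ℓ) ^ 2 := by
        rw [Fintype.sum_prod_type, sum_sq_condExp_sub]
        ring
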